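/- Let 𝔠 ⊆ R^{1×ℓ}⟨x,x*⟩ be a right chip space and I a left module generated by polynomials in R⟨x,x*⟩𝔠. Then (R^{ℓ×1}I + I*R^{1×ℓ}) ∩ 𝔠*R⟨x,x*⟩𝔠 = 𝔠*I + I*𝔠. -/

import Mathlib

open scoped BigOperators

namespace NSS

/-- Words in the `2g` free letters `x_1,…,x_g,x_1^*,…,x_g^*`
(a letter is a pair of an index and a `Bool`: `false` = unstarred, `true` = starred). -/
abbrev Word (g : ℕ) := FreeMonoid (Fin g × Bool)

/-- The free `*`-algebra `ℝ⟨x,x*⟩`. -/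
abbrev NC (g : ℕ) := MonoidAlgebra ℝ (Word g)

/-- `ν × ℓ` matrices of noncommutative polynomials. -/
abbrev NCMat (g ν ℓ : ℕ) := Matrix (Fin ν) (Fin ℓ) (NC g)

/-- The involution on words: reverse the word and swap starred/unstarred letters. -/
def wordStar {g : ℕ} (w : Word g) : Word g :=
  FreeMonoid.ofList (((FreeMonoid.toList w).map (fun p => (p.1, !p.2))).reverse)

/-- The involution on `ℝ⟨x,x*⟩`. -/
noncomputable def ncStar {g : ℕ} (p : NC g) : NC g :=
  MonoidAlgebra.ofCoeff (Finsupp.mapDomain wordStar (p.coeff : Word g →₀ ℝ))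

/-- The involution on matrix polynomials: transpose and apply `ncStar` entrywise. -/
noncomputable def matStar {g ν ℓ : ℕ} (p : NCMat g ν ℓ) : NCMat g ℓ ν :=
  Matrix.of fun i j => ncStar (p j i)

/-- The left action of a scalar polynomial on a matrix polynomial
(entrywise left multiplication, identifying `q` with `I ⊗ q`). -/
noncomputable def leftMul {g ν ℓ : ℕ} (q : NC g) (p : NCMat g ν ℓ) : NCMat g ν ℓ :=
  Matrix.of fun i j => q * p i j

/-- A constant real matrix, viewed as a matrix of noncommutative polynomials. -/
noncomputable def constMat {g m n : ℕ} (A : Matrix (Fin m) (Fin n) ℝ) : NCMat g m n :=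
  A.map (algebraMap ℝ (NC g))

/-- The space `ℝ^{ℓ×1}·I + I^*·ℝ^{1×ℓ}`. -/
noncomputable def realPart {g ℓ : ℕ} (I : Set (NCMat g 1 ℓ)) : Submodule ℝ (NCMat g ℓ ℓ) :=
  Submodule.span ℝ
    ({m | ∃ B : Matrix (Fin ℓ) (Fin 1) ℝ, ∃ a ∈ I, m = constMat B * a} ∪
     {m | ∃ B : Matrix (Fin 1) (Fin ℓ) ℝ, ∃ a ∈ I, m = matStar a * constMat B})

/-- Left `ℝ⟨x,x*⟩`-submodules of `ℝ^{1×ℓ}⟨x,x*⟩`. -/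
def IsLeftSubmodule {g ℓ : ℕ} (I : Set (NCMat g 1 ℓ)) : Prop :=
  0 ∈ I ∧ (∀ a b, a ∈ I → b ∈ I → a + b ∈ I) ∧
    (∀ (r : ℝ) a, a ∈ I → r • a ∈ I) ∧ ∀ (q : NC g) a, a ∈ I → leftMul q a ∈ I

/-- A left module `I` is *real* if any finite sum of hermitian squares lying in
`ℝ^{ℓ×1}·I + I^*·ℝ^{1×ℓ}` has all its terms in `I`. -/
def IsReal {g ℓ : ℕ} (I : Set (NCMat g 1 ℓ)) : Prop :=
  ∀ (n : ℕ) (p : Fin n → NCMat g 1 ℓ),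
    (∑ i, matStar (p i) * p i) ∈ realPart I → ∀ i, p i ∈ I

/-- The monomial `e_j ⊗ w ∈ ℝ^{1×ℓ}⟨x,x*⟩`. -/
noncomputable def rowMono {g ℓ : ℕ} (j : Fin ℓ) (w : Word g) : NCMat g 1 ℓ :=
  Matrix.of fun _ j' => if j' = j then (MonoidAlgebra.single w (1:ℝ) : NC g) else 0

/-- The left `ℝ⟨x,x*⟩`-submodule generated by a set. -/
def leftSpan {g ℓ : ℕ} (G : Set (NCMat g 1 ℓ)) : Set (NCMat g 1 ℓ) :=
  ⋂₀ {J | IsLeftSubmodule J ∧ G ⊆ J}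


/-- A set of row monomials (indexed by column and word) closed under right chips. -/
def IsRightChipClosed {g ℓ : ℕ} (S : Set (Fin ℓ × Word g)) : Prop :=
  ∀ (j : Fin ℓ) (u v : Word g), (j, u * v) ∈ S → (j, v) ∈ S

/-- The right chip space spanned by a chip-closed set of monomials. -/
noncomputable def chipSpace {g ℓ : ℕ} (S : Set (Fin ℓ × Word g)) :
    Submodule ℝ (NCMat g 1 ℓ) :=
  Submodule.span ℝ {p | ∃ m ∈ S, p = rowMono m.1 m.2}

/-- The space `ℝ⟨x,x*⟩·𝔠`. -/
noncomputable def algSpanChip {g ℓ : ℕ} (S : Set (Fin ℓ × Word g)) :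
    Submodule ℝ (NCMat g 1 ℓ) :=
  Submodule.span ℝ {p | ∃ q : NC g, ∃ c ∈ chipSpace S, p = leftMul q c}

/-- `Γ(𝔠)`: the set of columns `j` with `e_j ⊗ 1 ∈ 𝔠`. -/
def Gam {g ℓ : ℕ} (S : Set (Fin ℓ × Word g)) : Set (Fin ℓ) :=
  {j | (j, (1 : Word g)) ∈ S}

/-- The direct sum `⨁_{j ∈ Γ} e_j ⊗ ℝ⟨x,x*⟩`, i.e. row polynomials supported on
columns in `Γ`. -/
noncomputable def colSupported {g ℓ : ℕ} (Γ : Set (Fin ℓ)) : Submodule ℝ (NCMat g 1 ℓ) where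
  carrier := {p | ∀ j ∉ Γ, p 0 j = 0}
  add_mem' := by
    intro a b ha hb j hj
    simp [Matrix.add_apply, ha j hj, hb j hj]
  zero_mem' := by intro j hj; simp
  smul_mem' := by
    intro c a ha j hj
    simp [Matrix.smul_apply, ha j hj]

/-- The space `𝔠*·ℝ⟨x,x*⟩·𝔠 ⊆ ℝ^{ℓ×ℓ}⟨x,x*⟩`. -/
noncomputable def midSpan {g ℓ : ℕ} (S : Set (Fin ℓ × Word g)) :
    Submodule ℝ (NCMat g ℓ ℓ) :=
  Submodule.span ℝ
    {p | ∃ c₁ ∈ chipSpace S, ∃ q : NC g, ∃ c₂ ∈ chipSpace S, p = matStar c₁ * leftMul q c₂}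

/-!
Write `e_j = e_j ⊗ 1`. An element of `ℝ^{ℓ×1}I + I*ℝ^{1×ℓ}` has the form
`∑_j e_j^* f_j + ∑_k h_k^* e_k` with all `f_j, h_k ∈ I`. Since `I ⊆ ℝ⟨x,x*⟩𝔠` is supported on the
columns `Γ(𝔠)`, and every element of `𝔠*ℝ⟨x,x*⟩𝔠` vanishes on the rows and columns outside
`Γ(𝔠)`, the summands with `j, k ∉ Γ(𝔠)` of an element of the intersection are zero. For
`j ∈ Γ(𝔠)` we have `e_j ∈ 𝔠`, so what is left lies in `𝔠*I + I*𝔠`. Conversely, for a chip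
`c = e_j ⊗ u` one has `c^* ι = e_j^* (u^* ι)` and `ι^* c = (u^* ι)^* e_j` with `u^* ι ∈ I`.
-/

variable {g ℓ : ℕ}

section Involution

lemma wordStar_mul (u v : Word g) : wordStar (u * v) = wordStar v * wordStar u := by
  simp [wordStar, FreeMonoid.toList_mul]

lemma wordStar_wordStar (w : Word g) : wordStar (wordStar w) = w := by
  simp [wordStar, List.map_reverse, Function.comp_def]

lemma ncStar_zero : ncStar (0 : NC g) = 0 := by simp [ncStar]

lemma ncStar_add (p q : NC g) : ncStar (p + q) = ncStar p + ncStar q := by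
  simp only [ncStar, MonoidAlgebra.coeff_add, Finsupp.mapDomain_add, MonoidAlgebra.ofCoeff_add]

lemma ncStar_smul (r : ℝ) (p : NC g) : ncStar (r • p) = r • ncStar p := by
  simp only [ncStar, MonoidAlgebra.coeff_smul, Finsupp.mapDomain_smul, MonoidAlgebra.ofCoeff_smul]

lemma ncStar_single (w : Word g) (r : ℝ) :
    ncStar (MonoidAlgebra.single w r) = MonoidAlgebra.single (wordStar w) r := by
  simp only [ncStar, MonoidAlgebra.coeff_single, Finsupp.mapDomain_single,
    MonoidAlgebra.ofCoeff_single]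

lemma ncStar_one : ncStar (1 : NC g) = 1 := by
  rw [MonoidAlgebra.one_def, ncStar_single]
  rfl

lemma ncStar_mul (p q : NC g) : ncStar (p * q) = ncStar q * ncStar p := by
  induction p using MonoidAlgebra.induction_linear with
  | zero => simp [ncStar_zero]
  | add a b ha hb => rw [add_mul, ncStar_add, ncStar_add, mul_add, ha, hb]
  | single w r =>
    induction q using MonoidAlgebra.induction_linear with
    | zero => simp [ncStar_zero]
    | add a b ha hb => rw [mul_add, ncStar_add, ncStar_add, add_mul, ha, hb]
    | single v s =>
      rw [MonoidAlgebra.single_mul_single, ncStar_single, ncStar_single, ncStar_single,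
        MonoidAlgebra.single_mul_single, wordStar_mul, mul_comm s r]

lemma matStar_zero {ν : ℕ} : matStar (0 : NCMat g ν ℓ) = 0 := by
  ext i j; simp [matStar, ncStar_zero]

lemma matStar_add {ν : ℕ} (a b : NCMat g ν ℓ) : matStar (a + b) = matStar a + matStar b := by
  ext i j; simp [matStar, ncStar_add]

lemma matStar_smul {ν : ℕ} (r : ℝ) (a : NCMat g ν ℓ) : matStar (r • a) = r • matStar a := by
  ext i j; simp [matStar, ncStar_smul]

end Involution

section LeftModules

lemma leftMul_zero {ν : ℕ} (q : NC g) : leftMul q (0 : NCMat g ν ℓ) = 0 := by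
  ext i j; simp [leftMul]

lemma leftMul_add {ν : ℕ} (q : NC g) (a b : NCMat g ν ℓ) :
    leftMul q (a + b) = leftMul q a + leftMul q b := by
  ext i j; simp [leftMul, mul_add]

lemma leftMul_smul {ν : ℕ} (q : NC g) (r : ℝ) (a : NCMat g ν ℓ) :
    leftMul q (r • a) = r • leftMul q a := by
  ext i j; simp [leftMul]

lemma leftMul_leftMul {ν : ℕ} (q q' : NC g) (a : NCMat g ν ℓ) :
    leftMul q (leftMul q' a) = leftMul (q * q') a := by
  ext i j; simp [leftMul, mul_assoc]

lemma isLeftSubmodule_leftSpan (G : Set (NCMat g 1 ℓ)) : IsLeftSubmodule (leftSpan G) :=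
  ⟨fun _ hJ => hJ.1.1, fun a b ha hb J hJ => hJ.1.2.1 a b (ha J hJ) (hb J hJ),
    fun r a ha J hJ => hJ.1.2.2.1 r a (ha J hJ), fun q a ha J hJ => hJ.1.2.2.2 q a (ha J hJ)⟩

lemma leftSpan_subset {G J : Set (NCMat g 1 ℓ)} (hJ : IsLeftSubmodule J) (hG : G ⊆ J) :
    leftSpan G ⊆ J := fun _ hx => hx J ⟨hJ, hG⟩

lemma leftMul_mem_algSpanChip {S : Set (Fin ℓ × Word g)} (q : NC g) {p : NCMat g 1 ℓ}
    (hp : p ∈ algSpanChip S) : leftMul q p ∈ algSpanChip S := by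
  induction hp using Submodule.span_induction with
  | mem x hx =>
    obtain ⟨q', c, hc, rfl⟩ := hx
    exact Submodule.subset_span ⟨q * q', c, hc, leftMul_leftMul q q' c⟩
  | zero => rw [leftMul_zero]; exact Submodule.zero_mem _
  | add x y _ _ hx hy => rw [leftMul_add]; exact Submodule.add_mem _ hx hy
  | smul r x _ hx => rw [leftMul_smul]; exact Submodule.smul_mem _ r hx

lemma isLeftSubmodule_algSpanChip (S : Set (Fin ℓ × Word g)) :
    IsLeftSubmodule (algSpanChip S : Set (NCMat g 1 ℓ)) :=
  ⟨Submodule.zero_mem _, fun _ _ ha hb => Submodule.add_mem _ ha hb,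
    fun r _ ha => Submodule.smul_mem _ r ha, fun q _ ha => leftMul_mem_algSpanChip q ha⟩

end LeftModules

section Support

variable {S : Set (Fin ℓ × Word g)}

lemma mem_gam_of_mem (hS : IsRightChipClosed S) {j : Fin ℓ} {u : Word g} (h : (j, u) ∈ S) :
    j ∈ Gam S :=
  hS j u 1 (by rwa [mul_one])

lemma rowMono_one_mem_chipSpace {j : Fin ℓ} (hj : j ∈ Gam S) : rowMono j 1 ∈ chipSpace S :=
  Submodule.subset_span ⟨(j, 1), hj, rfl⟩

lemma chipSpace_le_colSupported (hS : IsRightChipClosed S) :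
    chipSpace S ≤ colSupported (Gam S) := by
  refine Submodule.span_le.mpr ?_
  rintro p ⟨⟨j, u⟩, hm, rfl⟩ k hk
  exact if_neg fun hkj : k = j => hk (hkj ▸ mem_gam_of_mem hS hm)

lemma algSpanChip_le_colSupported (hS : IsRightChipClosed S) :
    algSpanChip S ≤ colSupported (Gam S) := by
  refine Submodule.span_le.mpr ?_
  rintro p ⟨q, c, hc, rfl⟩ k hk
  simp [leftMul, chipSpace_le_colSupported hS hc k hk]

lemma apply_eq_zero_of_mem_midSpan_of_row_notMem (hS : IsRightChipClosed S) {p : NCMat g ℓ ℓ}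
    (hp : p ∈ midSpan S) {j : Fin ℓ} (hj : j ∉ Gam S) (k : Fin ℓ) : p j k = 0 := by
  induction hp using Submodule.span_induction with
  | mem x hx =>
    obtain ⟨c₁, hc₁, q, c₂, hc₂, rfl⟩ := hx
    simp [Matrix.mul_apply, matStar, chipSpace_le_colSupported hS hc₁ j hj, ncStar_zero]
  | zero => simp
  | add x y _ _ hx hy => simp [hx, hy]
  | smul r x _ hx => simp [hx]

lemma apply_eq_zero_of_mem_midSpan_of_col_notMem (hS : IsRightChipClosed S) {p : NCMat g ℓ ℓ}
    (hp : p ∈ midSpan S) {k : Fin ℓ} (hk : k ∉ Gam S) (j : Fin ℓ) : p j k = 0 := by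
  induction hp using Submodule.span_induction with
  | mem x hx =>
    obtain ⟨c₁, hc₁, q, c₂, hc₂, rfl⟩ := hx
    simp [Matrix.mul_apply, leftMul, chipSpace_le_colSupported hS hc₂ k hk]
  | zero => simp
  | add x y _ _ hx hy => simp [hx, hy]
  | smul r x _ hx => simp [hx]

end Support

section Decomposition

lemma matStar_rowMono_one_mul_apply (j : Fin ℓ) (f : NCMat g 1 ℓ) (a b : Fin ℓ) :
    (matStar (rowMono j 1 : NCMat g 1 ℓ) * f) a b = if a = j then f 0 b else 0 := by
  rw [Matrix.mul_apply, Fin.sum_univ_one]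
  by_cases h : a = j <;>
    simp [matStar, rowMono, h, ← MonoidAlgebra.one_def, ncStar_one, ncStar_zero]

lemma matStar_mul_rowMono_one_apply (k : Fin ℓ) (h : NCMat g 1 ℓ) (a b : Fin ℓ) :
    (matStar h * (rowMono k 1 : NCMat g 1 ℓ)) a b = if b = k then ncStar (h 0 a) else 0 := by
  rw [Matrix.mul_apply, Fin.sum_univ_one]
  by_cases hb : b = k <;> simp [matStar, rowMono, hb, ← MonoidAlgebra.one_def]

lemma eq_sum_of_apply_eq {p : NCMat g ℓ ℓ} {f h : Fin ℓ → NCMat g 1 ℓ}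
    (hp : ∀ a b, p a b = f a 0 b + ncStar (h b 0 a)) :
    p = ∑ j, matStar (rowMono j 1 : NCMat g 1 ℓ) * f j +
      ∑ k, matStar (h k) * (rowMono k 1 : NCMat g 1 ℓ) := by
  ext a b : 1
  simp [hp, Matrix.sum_apply, matStar_rowMono_one_mul_apply, matStar_mul_rowMono_one_apply]

end Decomposition

section RealPart

variable {I : Set (NCMat g 1 ℓ)}

/-- Because `constMat` leaves its dimensions implicit, the products in `realPart` elaborate
with the `CStarMatrix` multiplication instance; it is the matrix product. -/
lemma cstarMatrix_mul_apply {m n k : ℕ} (A : NCMat g m n) (B : NCMat g n k) (i : Fin m)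
    (j : Fin k) :
    @HMul.hMul (NCMat g m n) (NCMat g n k) (NCMat g m k)
      CStarMatrix.instHMulOfFintypeOfMulOfAddCommMonoid A B i j = ∑ x, A i x * B x j :=
  rfl

lemma exists_apply_eq_of_mem_realPart (hI : IsLeftSubmodule I) {p : NCMat g ℓ ℓ}
    (hp : p ∈ realPart I) :
    ∃ f h : Fin ℓ → NCMat g 1 ℓ, (∀ j, f j ∈ I) ∧ (∀ k, h k ∈ I) ∧
      ∀ a b, p a b = f a 0 b + ncStar (h b 0 a) := by
  obtain ⟨hI0, hIadd, hIsmul, -⟩ := hI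
  induction hp using Submodule.span_induction with
  | mem x hx =>
    rcases hx with ⟨B, a, ha, rfl⟩ | ⟨B, a, ha, rfl⟩
    · refine ⟨fun j => B j 0 • a, 0, fun j => hIsmul _ _ ha, fun _ => hI0, fun j k => ?_⟩
      rw [cstarMatrix_mul_apply, Fin.sum_univ_one]
      simp [constMat, Algebra.smul_def, ncStar_zero]
    · refine ⟨0, fun k => B 0 k • a, fun _ => hI0, fun k => hIsmul _ _ ha, fun j k => ?_⟩
      rw [cstarMatrix_mul_apply, Fin.sum_univ_one]
      simp only [matStar, constMat, Matrix.of_apply, Matrix.map_apply, Pi.zero_apply,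
        Matrix.zero_apply, Matrix.smul_apply, ncStar_smul, zero_add]
      rw [← Algebra.commutes, ← Algebra.smul_def]
  | zero => exact ⟨0, 0, fun _ => hI0, fun _ => hI0, by simp [ncStar_zero]⟩
  | add x y _ _ hx hy =>
    obtain ⟨f, h, hf, hh, hfh⟩ := hx
    obtain ⟨f', h', hf', hh', hfh'⟩ := hy
    refine ⟨f + f', h + h', fun j => hIadd _ _ (hf j) (hf' j), fun k => hIadd _ _ (hh k) (hh' k),
      fun a b => ?_⟩
    simp only [Matrix.add_apply, Pi.add_apply, hfh, hfh', ncStar_add]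
    abel
  | smul r x _ hx =>
    obtain ⟨f, h, hf, hh, hfh⟩ := hx
    exact ⟨r • f, r • h, fun j => hIsmul _ _ (hf j), fun k => hIsmul _ _ (hh k),
      fun a b => by simp [hfh, ncStar_smul]⟩

lemma mem_realPart_of_star_rowMono_mul (hI : IsLeftSubmodule I) {ι : NCMat g 1 ℓ} (hι : ι ∈ I)
    (j : Fin ℓ) (u : Word g) : matStar (rowMono j u) * ι ∈ realPart I := by
  refine Submodule.subset_span (Or.inl ⟨Matrix.of fun i _ => if i = j then 1 else 0,
    leftMul (MonoidAlgebra.single (wordStar u) 1) ι, hI.2.2.2 _ _ hι, ?_⟩)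
  ext i k : 1
  rw [Matrix.mul_apply, Fin.sum_univ_one, cstarMatrix_mul_apply, Fin.sum_univ_one]
  by_cases h : i = j <;>
    simp [matStar, rowMono, constMat, leftMul, h, ncStar_single, ncStar_zero,
      ← MonoidAlgebra.one_def]

lemma mem_realPart_of_mul_rowMono (hI : IsLeftSubmodule I) {ι : NCMat g 1 ℓ} (hι : ι ∈ I)
    (j : Fin ℓ) (u : Word g) : matStar ι * rowMono j u ∈ realPart I := by
  refine Submodule.subset_span (Or.inr ⟨Matrix.of fun _ k => if k = j then 1 else 0,
    leftMul (MonoidAlgebra.single (wordStar u) 1) ι, hI.2.2.2 _ _ hι, ?_⟩)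
  ext i k : 1
  rw [Matrix.mul_apply, Fin.sum_univ_one, cstarMatrix_mul_apply, Fin.sum_univ_one]
  by_cases h : k = j <;>
    simp [matStar, rowMono, constMat, leftMul, h, ncStar_mul, ncStar_single, wordStar_wordStar,
      ← MonoidAlgebra.one_def]

lemma mem_realPart_of_star_chip_mul (hI : IsLeftSubmodule I) {S : Set (Fin ℓ × Word g)}
    {c ι : NCMat g 1 ℓ} (hc : c ∈ chipSpace S) (hι : ι ∈ I) : matStar c * ι ∈ realPart I := by
  induction hc using Submodule.span_induction with
  | mem x hx =>
    obtain ⟨⟨j, u⟩, -, rfl⟩ := hx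
    exact mem_realPart_of_star_rowMono_mul hI hι j u
  | zero => rw [matStar_zero, Matrix.zero_mul]; exact Submodule.zero_mem _
  | add x y _ _ hx hy => rw [matStar_add, Matrix.add_mul]; exact Submodule.add_mem _ hx hy
  | smul r x _ hx => rw [matStar_smul, Matrix.smul_mul]; exact Submodule.smul_mem _ r hx

lemma mem_realPart_of_star_mul_chip (hI : IsLeftSubmodule I) {S : Set (Fin ℓ × Word g)}
    {c ι : NCMat g 1 ℓ} (hc : c ∈ chipSpace S) (hι : ι ∈ I) : matStar ι * c ∈ realPart I := by
  induction hc using Submodule.span_induction with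
  | mem x hx =>
    obtain ⟨⟨j, u⟩, -, rfl⟩ := hx
    exact mem_realPart_of_mul_rowMono hI hι j u
  | zero => rw [Matrix.mul_zero]; exact Submodule.zero_mem _
  | add x y _ _ hx hy => rw [Matrix.mul_add]; exact Submodule.add_mem _ hx hy
  | smul r x _ hx => rw [Matrix.mul_smul]; exact Submodule.smul_mem _ r hx

end RealPart

section MidSpan

variable {S : Set (Fin ℓ × Word g)}

lemma mem_midSpan_of_star_chip_mul {c ι : NCMat g 1 ℓ} (hc : c ∈ chipSpace S)
    (hι : ι ∈ algSpanChip S) : matStar c * ι ∈ midSpan S := by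
  induction hι using Submodule.span_induction with
  | mem x hx =>
    obtain ⟨q, c₂, hc₂, rfl⟩ := hx
    exact Submodule.subset_span ⟨c, hc, q, c₂, hc₂, rfl⟩
  | zero => rw [Matrix.mul_zero]; exact Submodule.zero_mem _
  | add x y _ _ hx hy => rw [Matrix.mul_add]; exact Submodule.add_mem _ hx hy
  | smul r x _ hx => rw [Matrix.mul_smul]; exact Submodule.smul_mem _ r hx

lemma matStar_leftMul_mul (q : NC g) (a c : NCMat g 1 ℓ) :
    matStar (leftMul q a) * c = matStar a * leftMul (ncStar q) c := by
  ext i k : 1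
  rw [Matrix.mul_apply, Fin.sum_univ_one, Matrix.mul_apply, Fin.sum_univ_one]
  simp only [matStar, Matrix.of_apply, leftMul, ncStar_mul, mul_assoc]

lemma mem_midSpan_of_star_mul_chip {c ι : NCMat g 1 ℓ} (hc : c ∈ chipSpace S)
    (hι : ι ∈ algSpanChip S) : matStar ι * c ∈ midSpan S := by
  induction hι using Submodule.span_induction with
  | mem x hx =>
    obtain ⟨q, c₂, hc₂, rfl⟩ := hx
    rw [matStar_leftMul_mul]
    exact Submodule.subset_span ⟨c₂, hc₂, ncStar q, c, hc, rfl⟩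
  | zero => rw [matStar_zero, Matrix.zero_mul]; exact Submodule.zero_mem _
  | add x y _ _ hx hy => rw [matStar_add, Matrix.add_mul]; exact Submodule.add_mem _ hx hy
  | smul r x _ hx => rw [matStar_smul, Matrix.smul_mul]; exact Submodule.smul_mem _ r hx

end MidSpan

/-- The space `𝔠*I + I*𝔠`. -/
noncomputable def chipMulSpan (S : Set (Fin ℓ × Word g)) (I : Set (NCMat g 1 ℓ)) :
    Submodule ℝ (NCMat g ℓ ℓ) :=
  Submodule.span ℝ
    ({m | ∃ c ∈ chipSpace S, ∃ ι ∈ I, m = matStar c * ι} ∪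
     {m | ∃ c ∈ chipSpace S, ∃ ι ∈ I, m = matStar ι * c})

variable {S : Set (Fin ℓ × Word g)} {I : Set (NCMat g 1 ℓ)}

lemma realPart_inf_midSpan_le_chipMulSpan (hS : IsRightChipClosed S) (hI : IsLeftSubmodule I)
    (hIcol : I ⊆ (colSupported (g := g) (Gam S) : Set (NCMat g 1 ℓ))) :
    realPart I ⊓ midSpan S ≤ chipMulSpan S I := by
  rintro p ⟨hpr, hpm⟩
  obtain ⟨f, h, hf, hh, hfh⟩ := exists_apply_eq_of_mem_realPart hI hpr
  have hrow : ∀ j ∉ Gam S, ∀ b, f j 0 b = 0 := fun j hj b => by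
    simpa [apply_eq_zero_of_mem_midSpan_of_row_notMem hS hpm hj, hIcol (hh b) j hj, ncStar_zero,
      eq_comm] using hfh j b
  have hcol : ∀ k ∉ Gam S, ∀ a, ncStar (h k 0 a) = 0 := fun k hk a => by
    simpa [apply_eq_zero_of_mem_midSpan_of_col_notMem hS hpm hk, hIcol (hf a) k hk, eq_comm]
      using hfh a k
  rw [eq_sum_of_apply_eq hfh]
  refine add_mem (sum_mem fun j _ => ?_) (sum_mem fun k _ => ?_)
  · by_cases hj : j ∈ Gam S
    · exact Submodule.subset_span (Or.inl ⟨_, rowMono_one_mem_chipSpace hj, f j, hf j, rfl⟩)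
    · convert zero_mem (chipMulSpan S I)
      ext a b : 1
      simp [matStar_rowMono_one_mul_apply, hrow j hj]
  · by_cases hk : k ∈ Gam S
    · exact Submodule.subset_span (Or.inr ⟨_, rowMono_one_mem_chipSpace hk, h k, hh k, rfl⟩)
    · convert zero_mem (chipMulSpan S I)
      ext a b : 1
      simp [matStar_mul_rowMono_one_apply, hcol k hk]

lemma chipMulSpan_le_realPart_inf_midSpan (hI : IsLeftSubmodule I)
    (hIalg : I ⊆ (algSpanChip S : Set (NCMat g 1 ℓ))) :
    chipMulSpan S I ≤ realPart I ⊓ midSpan S := by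
  refine Submodule.span_le.mpr ?_
  rintro m (⟨c, hc, ι, hι, rfl⟩ | ⟨c, hc, ι, hι, rfl⟩)
  · exact ⟨mem_realPart_of_star_chip_mul hI hc hι, mem_midSpan_of_star_chip_mul hc (hIalg hι)⟩
  · exact ⟨mem_realPart_of_star_mul_chip hI hc hι, mem_midSpan_of_star_mul_chip hc (hIalg hι)⟩

/-- if `I` is a left module generated by polynomials in `ℝ⟨x,x*⟩𝔠`, then
`(ℝ^{ℓ×1}I + I*ℝ^{1×ℓ}) ∩ 𝔠*ℝ⟨x,x*⟩𝔠 = 𝔠*I + I*𝔠`. -/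
theorem stmt10 {g ℓ : ℕ} (S : Set (Fin ℓ × Word g)) (hS : IsRightChipClosed S)
    (I : Set (NCMat g 1 ℓ))
    (hgen : ∃ G : Set (NCMat g 1 ℓ), G ⊆ (algSpanChip S : Set (NCMat g 1 ℓ)) ∧
      I = leftSpan G) :
    realPart I ⊓ midSpan S =
      Submodule.span ℝ
        ({m | ∃ c ∈ chipSpace S, ∃ ι ∈ I, m = matStar c * ι} ∪
         {m | ∃ c ∈ chipSpace S, ∃ ι ∈ I, m = matStar ι * c}) := by
  obtain ⟨G, hG, rfl⟩ := hgen
  have hI : IsLeftSubmodule (leftSpan G) := isLeftSubmodule_leftSpan G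
  have hIalg : leftSpan G ⊆ algSpanChip S := leftSpan_subset (isLeftSubmodule_algSpanChip S) hG
  exact le_antisymm
    (realPart_inf_midSpan_le_chipMulSpan hS hI (hIalg.trans (algSpanChip_le_colSupported hS)))
    (chipMulSpan_le_realPart_inf_midSpan hI hIalg)

end NSS
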